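/- arXiv:2601.14232 — 4 statements merged into one kernel-verified Lean document; each statement's English description precedes it below -/
import Mathlib

section
/- Let S, Ω, A be finite sets, ρ_0 : PMF S, P : S → A → PMF S, O : S → PMF Ω, π : Ω → PMF A, and let π_ξ be the induced state policy. Then for any function F : ((S × A)^T × S) → ℝ on length-T trajectories, the pushforward of the observation-mediated trajectory distribution under F equals the pushforward of the latent-MDP trajectory distribution (with policy π_ξ) under F. In particular, F has the same distribution under both processes. -/
open scoped ENNReal BigOperators

/-- Length-`T` trajectory distribution of the latent MDP with state policy `σ`:
`a_t ~ σ(·|s_t)`, `s_{t+1} ~ P(·|s_t,a_t)`. -/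
noncomputable def latentTraj {S A : Type*} (P : S → A → PMF S) (σ : S → PMF A) :
    ℕ → S → PMF (List (S × A) × S)
  | 0, s => PMF.pure ([], s)
  | T + 1, s =>
      (σ s).bind fun a => (P s a).bind fun s' =>
        (latentTraj P σ T s').map fun t => ((s, a) :: t.1, t.2)

/-- Length-`T` trajectory distribution of the visual POMDP, marginalizing the
observations: `o_t ~ O(·|s_t)`, `a_t ~ π(·|o_t)`, `s_{t+1} ~ P(·|s_t,a_t)`. -/
noncomputable def pomdpTraj {S Ω A : Type*} (P : S → A → PMF S)
    (O : S → PMF Ω) (π : Ω → PMF A) : ℕ → S → PMF (List (S × A) × S)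
  | 0, s => PMF.pure ([], s)
  | T + 1, s =>
      (O s).bind fun o => (π o).bind fun a => (P s a).bind fun s' =>
        (pomdpTraj P O π T s').map fun t => ((s, a) :: t.1, t.2)

/-- Expected value of a real-valued functional under a PMF. -/
noncomputable def expVal {τ : Type*} (p : PMF τ) (F : τ → ℝ) : ℝ :=
  ∑' t, (p t).toReal * F t

/-- Total (undiscounted) reward of a state–action trajectory. -/
def totalReward {S A : Type*} (r : S → A → ℝ) (t : List (S × A) × S) : ℝ :=
  (t.1.map fun sa => r sa.1 sa.2).sum

/-- For any real-valued functional `F` on length-`T`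
trajectories, the pushforward of the observation-mediated trajectory
distribution under `F` equals the pushforward of the latent-MDP trajectory
distribution (with the induced state policy) under `F`. -/
theorem pomdp_functional_law_eq_latent
    {S Ω A : Type*} [Fintype S] [Fintype Ω] [Fintype A]
    (ρ0 : PMF S) (P : S → A → PMF S) (O : S → PMF Ω) (π : Ω → PMF A)
    (σ : S → PMF A) (hσ : ∀ s a, σ s a = ∑ o : Ω, π o a * O s o)
    (T : ℕ) (F : List (S × A) × S → ℝ) :
    (ρ0.bind (pomdpTraj P O π T)).map F
      = (ρ0.bind (latentTraj P σ T)).map F := by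
  have hbind : ∀ s : S, (O s).bind π = σ s := by
    intro s
    ext a
    rw [PMF.bind_apply, hσ, tsum_fintype]
    exact Finset.sum_congr rfl fun o _ => mul_comm _ _
  have key : ∀ (T : ℕ) (s : S), pomdpTraj P O π T s = latentTraj P σ T s := by
    intro T
    induction T with
    | zero => intro s; rfl
    | succ T ih =>
      intro s
      show ((O s).bind fun o => (π o).bind fun a => (P s a).bind fun s' =>
          (pomdpTraj P O π T s').map fun t => ((s, a) :: t.1, t.2)) = _
      rw [← PMF.bind_bind, hbind]
      simp only [ih]
      rfl
  rw [funext (key T)]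
end

section
/- Let S, Ω, A be finite sets and suppose two observation kernels O, O' : S → PMF Ω induce the same state policy, i.e., Σ_o π(a|o)·O(o|s) = Σ_o π(a|o)·O'(o|s) for all s ∈ S, a ∈ A. Then the state–action trajectory distributions of the observation-mediated processes under O and O' coincide for every horizon T, and in particular all expected trajectory-level metrics coincide. -/
open scoped ENNReal BigOperators

lemma bind_obs_eq {S Ω A β : Type*} [Fintype Ω] [Fintype A]
    (O O' : S → PMF Ω) (π : Ω → PMF A) (s : S)
    (h : ∀ a, (∑ o : Ω, π o a * O s o) = ∑ o : Ω, π o a * O' s o)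
    (f : A → PMF β) :
    (O s).bind (fun o => (π o).bind f) = (O' s).bind (fun o => (π o).bind f) := by
  ext x
  simp only [PMF.bind_apply, tsum_fintype]
  have key : ∀ (Q : S → PMF Ω), (∀ a, (∑ o : Ω, π o a * O s o) = ∑ o : Ω, π o a * Q s o) →
      (∑ o : Ω, O s o * ∑ a : A, π o a * f a x)
        = ∑ o : Ω, Q s o * ∑ a : A, π o a * f a x := by
    intro Q hQ
    have : ∀ (R : S → PMF Ω), (∑ o : Ω, R s o * ∑ a : A, π o a * f a x)
        = ∑ a : A, (∑ o : Ω, π o a * R s o) * f a x := by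
      intro R
      simp only [Finset.mul_sum, Finset.sum_mul]
      rw [Finset.sum_comm]
      refine Finset.sum_congr rfl fun a _ => Finset.sum_congr rfl fun o _ => ?_
      ring
    rw [this O, this Q]
    simp [hQ]
  exact key O' h

lemma pomdp_eq {S Ω A : Type*} [Fintype S] [Fintype Ω] [Fintype A]
    (P : S → A → PMF S) (O O' : S → PMF Ω) (π : Ω → PMF A)
    (h : ∀ s a, (∑ o : Ω, π o a * O s o) = ∑ o : Ω, π o a * O' s o) :
    ∀ T s, pomdpTraj P O π T s = pomdpTraj P O' π T s := by
  intro T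
  induction T with
  | zero => intro s; rfl
  | succ T ih =>
    intro s
    show (O s).bind _ = (O' s).bind _
    rw [bind_obs_eq O O' π s (h s)
      (fun a => (P s a).bind fun s' => (pomdpTraj P O π T s').map fun t => ((s, a) :: t.1, t.2))]
    simp only [ih]

/-- If two observation kernels induce the same state policy,
then the state–action trajectory distributions of the observation-mediated
processes coincide for every horizon, and in particular all expected
trajectory-level metrics coincide. -/
theorem same_induced_policy_same_traj
    {S Ω A : Type*} [Fintype S] [Fintype Ω] [Fintype A]
    (ρ0 : PMF S) (P : S → A → PMF S)
    (O O' : S → PMF Ω) (π : Ω → PMF A)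
    (h : ∀ s a, (∑ o : Ω, π o a * O s o) = ∑ o : Ω, π o a * O' s o) :
    (∀ T : ℕ, ρ0.bind (pomdpTraj P O π T) = ρ0.bind (pomdpTraj P O' π T)) ∧
    (∀ (T : ℕ) (F : List (S × A) × S → ℝ),
      expVal (ρ0.bind (pomdpTraj P O π T)) F
        = expVal (ρ0.bind (pomdpTraj P O' π T)) F) := by
  have key : ∀ T : ℕ, ρ0.bind (pomdpTraj P O π T) = ρ0.bind (pomdpTraj P O' π T) := by
    intro T
    exact congrArg ρ0.bind (funext (pomdp_eq P O O' π h T))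
  exact ⟨key, fun T F => by rw [key T]⟩
end

section
/- Let S, Ω, A be finite, and fix a latent state component x : S → ℝ, a threshold D > 0, an initial state distribution ρ_0, transition kernel P, observation kernel O, and pixel policy π with induced state policy π_ξ. Define the success probability at horizon T as the probability that x(s_T) − x(s_0) ≥ D. Then the success probability of the observation-mediated process equals the success probability of the latent process with policy π_ξ. -/
open scoped ENNReal BigOperators

/-- The success probability at horizon `T` — the probability
that `x(s_T) − x(s_0) ≥ D` — is the same for the observation-mediated process
and for the latent process with the induced state policy `π_ξ`. -/
theorem success_probability_eq
    {S Ω A : Type*} [Fintype S] [Fintype Ω] [Fintype A]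
    (ρ0 : PMF S) (P : S → A → PMF S) (O : S → PMF Ω) (π : Ω → PMF A)
    (σ : S → PMF A) (hσ : ∀ s a, σ s a = ∑ o : Ω, π o a * O s o)
    (x : S → ℝ) (D : ℝ) (hD : 0 < D) (T : ℕ) :
    (ρ0.bind fun s0 =>
        (pomdpTraj P O π T s0).map fun t => (s0, t)).toOuterMeasure
        {p : S × (List (S × A) × S) | D ≤ x p.2.2 - x p.1}
      = (ρ0.bind fun s0 =>
          (latentTraj P σ T s0).map fun t => (s0, t)).toOuterMeasure
          {p : S × (List (S × A) × S) | D ≤ x p.2.2 - x p.1} := by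
  have hσ' : ∀ s, σ s = (O s).bind π := by
    intro s
    ext a
    rw [hσ, PMF.bind_apply, tsum_fintype]
    exact Finset.sum_congr rfl fun o _ => mul_comm _ _
  have key : ∀ T s, pomdpTraj P O π T s = latentTraj P σ T s := by
    intro T
    induction T with
    | zero => intro s; rfl
    | succ T ih =>
      intro s
      show ((O s).bind fun o => (π o).bind fun a => (P s a).bind fun s' =>
          (pomdpTraj P O π T s').map fun t => ((s, a) :: t.1, t.2)) = _
      rw [← PMF.bind_bind (O s) π, ← hσ' s]
      show ((σ s).bind fun a => (P s a).bind fun s' =>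
          (pomdpTraj P O π T s').map fun t => ((s, a) :: t.1, t.2)) = _
      simp only [ih]
      rfl
  simp only [key]
end

section
/- Let S, A be finite, ρ_0 : PMF S, P : S → A → PMF S, and let σ, σ' : S → PMF A be state policies. For a bounded reward r with |r(s,a)| ≤ R, horizon T, and ε := max_s TV(σ(·|s), σ'(·|s)), the difference in expected total return satisfies |J(σ) − J(σ')| ≤ 2·R·T²·ε (a performance-difference bound), where TV is total variation distance on PMFs over A. -/
open scoped ENNReal BigOperators

/-- Total variation distance between two PMFs on a finite type. -/
noncomputable def tvDist {α : Type*} [Fintype α] (p q : PMF α) : ℝ :=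
  (1 / 2 : ℝ) * ∑ x : α, |(p x).toReal - (q x).toReal|

section PDBAux

open ENNReal

/-- `L¹` distance between two `PMF`s, in `ℝ≥0∞`. -/
noncomputable def eD {α : Type*} (p q : PMF α) : ℝ≥0∞ :=
  ∑' x, ((p x - q x) + (q x - p x))

lemma eD_self {α : Type*} (p : PMF α) : eD p p = 0 := by simp [eD]

lemma eD_le_two {α : Type*} (p q : PMF α) : eD p q ≤ 2 := by
  calc eD p q ≤ ∑' x, (p x + q x) :=
        ENNReal.tsum_le_tsum fun x => add_le_add tsub_le_self tsub_le_self
    _ = 1 + 1 := by rw [ENNReal.tsum_add, p.tsum_coe, q.tsum_coe]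
    _ = 2 := one_add_one_eq_two

lemma eD_ne_top {α : Type*} (p q : PMF α) : eD p q ≠ ⊤ :=
  ne_top_of_le_ne_top (by norm_num) (eD_le_two p q)

lemma absdiff_triangle (a b c : ℝ≥0∞) :
    (a - c) + (c - a) ≤ ((a - b) + (b - a)) + ((b - c) + (c - b)) := by
  have h : ∀ x y z : ℝ≥0∞, x - z ≤ (x - y) + (y - z) := by
    intro x y z
    rw [tsub_le_iff_right]
    calc x ≤ (x - y) + y := le_tsub_add
      _ ≤ (x - y) + ((y - z) + z) := by gcongr; exact le_tsub_add
      _ = (x - y) + (y - z) + z := by ring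
  calc (a - c) + (c - a) ≤ ((a - b) + (b - c)) + ((c - b) + (b - a)) :=
        add_le_add (h a b c) (h c b a)
    _ = ((a - b) + (b - a)) + ((b - c) + (c - b)) := by ring

lemma eD_triangle {α : Type*} (p q r : PMF α) : eD p r ≤ eD p q + eD q r := by
  calc eD p r ≤ ∑' x, (((p x - q x) + (q x - p x)) + ((q x - r x) + (r x - q x))) :=
        ENNReal.tsum_le_tsum fun x => absdiff_triangle _ _ _
    _ = eD p q + eD q r := ENNReal.tsum_add

lemma eD_bind_le {α β : Type*} (p q : PMF α) (f : α → PMF β) :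
    eD (p.bind f) (q.bind f) ≤ eD p q := by
  have key : ∀ (p q : PMF α) (x : β),
      p.bind f x - q.bind f x ≤ ∑' a, (p a - q a) * f a x := by
    intro p q x
    rw [tsub_le_iff_right, PMF.bind_apply, PMF.bind_apply, ← ENNReal.tsum_add]
    refine ENNReal.tsum_le_tsum fun a => ?_
    rw [← add_mul]
    exact mul_le_mul_left le_tsub_add _
  calc eD (p.bind f) (q.bind f)
      ≤ ∑' x, ∑' a, ((p a - q a) + (q a - p a)) * f a x := by
        refine ENNReal.tsum_le_tsum fun x => ?_
        calc _ ≤ (∑' a, (p a - q a) * f a x) + ∑' a, (q a - p a) * f a x :=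
              add_le_add (key p q x) (key q p x)
          _ = _ := by
              rw [← ENNReal.tsum_add]
              exact tsum_congr fun a => (add_mul _ _ _).symm
    _ = ∑' a, ((p a - q a) + (q a - p a)) * ∑' x, f a x := by
        rw [ENNReal.tsum_comm]
        exact tsum_congr fun a => ENNReal.tsum_mul_left
    _ = eD p q := by simp [eD, PMF.tsum_coe]

lemma eD_map_le {α β : Type*} (p q : PMF α) (g : α → β) :
    eD (p.map g) (q.map g) ≤ eD p q :=
  eD_bind_le p q _

lemma eD_bind_of_le {α β : Type*} (q : PMF α) (f f' : α → PMF β) (c : ℝ≥0∞)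
    (h : ∀ a, eD (f a) (f' a) ≤ c) : eD (q.bind f) (q.bind f') ≤ c := by
  have key : ∀ (f f' : α → PMF β) (x : β),
      q.bind f x - q.bind f' x ≤ ∑' a, q a * (f a x - f' a x) := by
    intro f f' x
    rw [tsub_le_iff_right, PMF.bind_apply, PMF.bind_apply, ← ENNReal.tsum_add]
    refine ENNReal.tsum_le_tsum fun a => ?_
    rw [← mul_add]
    exact mul_le_mul_right le_tsub_add _
  calc eD (q.bind f) (q.bind f')
      ≤ ∑' x, ∑' a, q a * ((f a x - f' a x) + (f' a x - f a x)) := by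
        refine ENNReal.tsum_le_tsum fun x => ?_
        calc _ ≤ (∑' a, q a * (f a x - f' a x)) + ∑' a, q a * (f' a x - f a x) :=
              add_le_add (key f f' x) (key f' f x)
          _ = _ := by
              rw [← ENNReal.tsum_add]
              exact tsum_congr fun a => (mul_add _ _ _).symm
    _ = ∑' a, q a * eD (f a) (f' a) := by
        rw [ENNReal.tsum_comm]
        exact tsum_congr fun a => ENNReal.tsum_mul_left
    _ ≤ ∑' a, q a * c := ENNReal.tsum_le_tsum fun a => mul_le_mul_right (h a) _
    _ = c := by rw [ENNReal.tsum_mul_right, q.tsum_coe, one_mul]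

lemma toReal_absdiff {a b : ℝ≥0∞} (ha : a ≠ ⊤) (hb : b ≠ ⊤) :
    ((a - b) + (b - a)).toReal = |a.toReal - b.toReal| := by
  rcases le_total a b with h | h
  · rw [tsub_eq_zero_of_le h, zero_add, ENNReal.toReal_sub_of_le h hb, abs_sub_comm,
      abs_of_nonneg (sub_nonneg.2 (ENNReal.toReal_mono hb h))]
  · rw [tsub_eq_zero_of_le h, add_zero, ENNReal.toReal_sub_of_le h ha,
      abs_of_nonneg (sub_nonneg.2 (ENNReal.toReal_mono ha h))]

lemma summable_pmf_toReal {α : Type*} (p : PMF α) : Summable fun x => (p x).toReal :=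
  ENNReal.summable_toReal p.tsum_coe_ne_top

lemma eD_toReal_eq {α : Type*} (p q : PMF α) :
    (eD p q).toReal = ∑' x, |(p x).toReal - (q x).toReal| := by
  rw [eD, ENNReal.tsum_toReal_eq]
  · exact tsum_congr fun x => toReal_absdiff (p.apply_ne_top x) (q.apply_ne_top x)
  · intro x
    exact ne_top_of_le_ne_top (ENNReal.add_ne_top.2 ⟨p.apply_ne_top x, q.apply_ne_top x⟩)
      (add_le_add tsub_le_self tsub_le_self)

lemma summable_absdiff {α : Type*} (p q : PMF α) :
    Summable fun x => |(p x).toReal - (q x).toReal| := by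
  refine Summable.of_nonneg_of_le (fun x => abs_nonneg _) (fun x => ?_)
    ((summable_pmf_toReal p).add (summable_pmf_toReal q))
  calc |(p x).toReal - (q x).toReal| ≤ |(p x).toReal| + |(q x).toReal| := abs_sub _ _
    _ = (p x).toReal + (q x).toReal := by
        rw [abs_of_nonneg ENNReal.toReal_nonneg, abs_of_nonneg ENNReal.toReal_nonneg]

lemma summable_expVal {α : Type*} (p : PMF α) (F : α → ℝ) (C : ℝ)
    (hF : ∀ x ∈ p.support, |F x| ≤ C) : Summable fun x => (p x).toReal * F x := by
  refine Summable.of_norm (Summable.of_nonneg_of_le (fun x => norm_nonneg _) (fun x => ?_)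
    ((summable_pmf_toReal p).mul_right C))
  rcases eq_or_ne (p x) 0 with h | h
  · simp [h]
  · calc ‖(p x).toReal * F x‖ = (p x).toReal * |F x| := by
          rw [norm_mul, Real.norm_eq_abs, Real.norm_eq_abs, abs_of_nonneg ENNReal.toReal_nonneg]
      _ ≤ (p x).toReal * C := by
          exact mul_le_mul_of_nonneg_left (hF x h) ENNReal.toReal_nonneg

lemma abs_expVal_sub_le {α : Type*} (p q : PMF α) (F : α → ℝ) (C : ℝ) (_hC : 0 ≤ C)
    (hp : ∀ x ∈ p.support, |F x| ≤ C) (hq : ∀ x ∈ q.support, |F x| ≤ C) :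
    |expVal p F - expVal q F| ≤ C * (eD p q).toReal := by
  have hpF := summable_expVal p F C hp
  have hqF := summable_expVal q F C hq
  have hdiff : expVal p F - expVal q F = ∑' x, ((p x).toReal - (q x).toReal) * F x := by
    rw [expVal, expVal, ← Summable.tsum_sub hpF hqF]
    exact tsum_congr fun x => (sub_mul _ _ _).symm
  have hbound : ∀ x, |((p x).toReal - (q x).toReal) * F x|
      ≤ C * |(p x).toReal - (q x).toReal| := by
    intro x
    rcases eq_or_ne (p x) 0 with h1 | h1
    · rcases eq_or_ne (q x) 0 with h2 | h2
      · simp [h1, h2]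
      · rw [abs_mul, mul_comm]
        exact mul_le_mul_of_nonneg_right (hq x h2) (abs_nonneg _)
    · rw [abs_mul, mul_comm]
      exact mul_le_mul_of_nonneg_right (hp x h1) (abs_nonneg _)
  have hsum2 : Summable fun x => C * |(p x).toReal - (q x).toReal| :=
    (summable_absdiff p q).mul_left C
  have hS : Summable fun x => |((p x).toReal - (q x).toReal) * F x| :=
    Summable.of_nonneg_of_le (fun x => abs_nonneg _) hbound hsum2
  rw [hdiff, eD_toReal_eq, ← tsum_mul_left]
  calc |∑' x, ((p x).toReal - (q x).toReal) * F x|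
      ≤ ∑' x, |((p x).toReal - (q x).toReal) * F x| := by
        have h := norm_tsum_le_tsum_norm (f := fun x => ((p x).toReal - (q x).toReal) * F x)
          (by simp only [Real.norm_eq_abs]; exact hS)
        simp only [Real.norm_eq_abs] at h
        exact h
    _ ≤ ∑' x, C * |(p x).toReal - (q x).toReal| := Summable.tsum_le_tsum hbound hS hsum2
  
lemma eD_toReal_fintype {α : Type*} [Fintype α] (p q : PMF α) :
    (eD p q).toReal = 2 * tvDist p q := by
  rw [eD_toReal_eq, tsum_fintype]
  simp only [tvDist]
  ring

end PDBAux

section PDBMain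

open ENNReal

lemma latentTraj_length {S A : Type*} (P : S → A → PMF S) (σ : S → PMF A) :
    ∀ (T : ℕ) (s : S) (t : List (S × A) × S),
      t ∈ (latentTraj P σ T s).support → t.1.length = T := by
  intro T
  induction T with
  | zero =>
    intro s t ht
    simp only [latentTraj, PMF.support_pure, Set.mem_singleton_iff] at ht
    simp [ht]
  | succ T ih =>
    intro s t ht
    simp only [latentTraj, PMF.support_bind, PMF.support_map, Set.mem_iUnion,
      Set.mem_image] at ht
    obtain ⟨a, ha, s', hs', u, hu, rfl⟩ := ht
    simpa using ih s' u hu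

lemma abs_totalReward_le {S A : Type*} (r : S → A → ℝ) (R : ℝ) (hR : ∀ s a, |r s a| ≤ R)
    (t : List (S × A) × S) : |totalReward r t| ≤ R * t.1.length := by
  obtain ⟨l, s⟩ := t
  induction l with
  | nil => simp [totalReward]
  | cons hd tl ih =>
    simp only [totalReward, List.map_cons, List.sum_cons, List.length_cons] at *
    calc |r hd.1 hd.2 + (tl.map fun sa => r sa.1 sa.2).sum|
        ≤ |r hd.1 hd.2| + |(tl.map fun sa => r sa.1 sa.2).sum| := abs_add_le _ _
      _ ≤ R + R * tl.length := add_le_add (hR _ _) ih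
      _ = R * ((tl.length : ℝ) + 1) := by ring
      _ = R * ((tl.length + 1 : ℕ) : ℝ) := by push_cast; ring

lemma eD_latentTraj_le {S A : Type*} (P : S → A → PMF S) (σ σ' : S → PMF A)
    (δ : ℝ≥0∞) (h : ∀ s, eD (σ s) (σ' s) ≤ δ) :
    ∀ (T : ℕ) (s : S), eD (latentTraj P σ T s) (latentTraj P σ' T s) ≤ T * δ := by
  intro T
  induction T with
  | zero => intro s; simp [latentTraj, eD_self]
  | succ T ih =>
    intro s
    have hf : ∀ a : A,
        eD ((P s a).bind fun s' => (latentTraj P σ T s').map fun t => ((s, a) :: t.1, t.2))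
          ((P s a).bind fun s' => (latentTraj P σ' T s').map fun t => ((s, a) :: t.1, t.2))
          ≤ T * δ :=
      fun a => eD_bind_of_le _ _ _ _ fun s' => (eD_map_le _ _ _).trans (ih s')
    simp only [latentTraj]
    refine le_trans (eD_triangle _ ((σ' s).bind fun a => (P s a).bind fun s' =>
      (latentTraj P σ T s').map fun t => ((s, a) :: t.1, t.2)) _) ?_
    have h1 : eD ((σ s).bind fun a => (P s a).bind fun s' =>
          (latentTraj P σ T s').map fun t => ((s, a) :: t.1, t.2))
        ((σ' s).bind fun a => (P s a).bind fun s' =>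
          (latentTraj P σ T s').map fun t => ((s, a) :: t.1, t.2)) ≤ δ :=
      (eD_bind_le _ _ _).trans (h s)
    have h2 := eD_bind_of_le (σ' s) _ _ _ hf
    calc _ ≤ δ + (T : ℝ≥0∞) * δ := add_le_add h1 h2
      _ = ((T + 1 : ℕ) : ℝ≥0∞) * δ := by push_cast; ring

end PDBMain

/-- **performance-difference bound.** For bounded rewards
(`|r| ≤ R`), horizon `T`, and `ε = max_s TV(σ(·|s), σ'(·|s))`, the expected
total returns of two state policies differ by at most `2·R·T²·ε`. -/
theorem performance_difference_bound
    {S A : Type*} [Fintype S] [Fintype A] [Nonempty S]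
    (ρ0 : PMF S) (P : S → A → PMF S) (σ σ' : S → PMF A)
    (r : S → A → ℝ) (R : ℝ) (hR : ∀ s a, |r s a| ≤ R) (T : ℕ) :
    |expVal (ρ0.bind (latentTraj P σ T)) (totalReward r)
        - expVal (ρ0.bind (latentTraj P σ' T)) (totalReward r)|
      ≤ 2 * R * (T : ℝ) ^ 2 *
          (Finset.univ.sup' Finset.univ_nonempty fun s => tvDist (σ s) (σ' s)) := by
  classical
  obtain ⟨s0⟩ := (inferInstance : Nonempty S)
  obtain ⟨a0, ha0⟩ := (σ s0).support_nonempty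
  have hR0 : 0 ≤ R := (abs_nonneg _).trans (hR s0 a0)
  set ε := Finset.univ.sup' Finset.univ_nonempty (fun s => tvDist (σ s) (σ' s)) with hεdef
  have hε0 : 0 ≤ ε := by
    refine le_trans ?_ (Finset.le_sup' (fun s => tvDist (σ s) (σ' s)) (Finset.mem_univ s0))
    simp only [tvDist]
    positivity
  have hσ : ∀ s, eD (σ s) (σ' s) ≤ ENNReal.ofReal (2 * ε) := by
    intro s
    rw [ENNReal.le_ofReal_iff_toReal_le (eD_ne_top _ _) (by positivity), eD_toReal_fintype]
    have h := Finset.le_sup' (fun s => tvDist (σ s) (σ' s)) (Finset.mem_univ s)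
    nlinarith
  have hD : eD (ρ0.bind (latentTraj P σ T)) (ρ0.bind (latentTraj P σ' T))
      ≤ T * ENNReal.ofReal (2 * ε) :=
    eD_bind_of_le _ _ _ _ fun s => eD_latentTraj_le P σ σ' _ hσ T s
  have hsupp : ∀ (τ : S → PMF A) x, x ∈ (ρ0.bind (latentTraj P τ T)).support →
      |totalReward r x| ≤ R * T := by
    intro τ x hx
    simp only [PMF.support_bind, Set.mem_iUnion] at hx
    obtain ⟨s, hs, hxs⟩ := hx
    have hlen := latentTraj_length P τ T s x hxs
    calc |totalReward r x| ≤ R * x.1.length := abs_totalReward_le r R hR x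
      _ = R * T := by rw [hlen]
  have hmain := abs_expVal_sub_le (ρ0.bind (latentTraj P σ T)) (ρ0.bind (latentTraj P σ' T))
    (totalReward r) (R * T) (by positivity) (hsupp σ) (hsupp σ')
  refine hmain.trans ?_
  have htop : ((T : ℝ≥0∞) * ENNReal.ofReal (2 * ε)) ≠ ⊤ :=
    ENNReal.mul_ne_top (ENNReal.natCast_ne_top T) ENNReal.ofReal_ne_top
  have h2 : (eD (ρ0.bind (latentTraj P σ T)) (ρ0.bind (latentTraj P σ' T))).toReal
      ≤ T * (2 * ε) := by
    have h3 := ENNReal.toReal_mono htop hD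
    rwa [ENNReal.toReal_mul, ENNReal.toReal_natCast, ENNReal.toReal_ofReal (by positivity)] at h3
  calc (R * T) * (eD (ρ0.bind (latentTraj P σ T)) (ρ0.bind (latentTraj P σ' T))).toReal
      ≤ (R * T) * ((T : ℝ) * (2 * ε)) := mul_le_mul_of_nonneg_left h2 (by positivity)
    _ = 2 * R * (T : ℝ) ^ 2 * ε := by ring
end
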